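/- arXiv:2303.02738 — 5 statements merged into one kernel-verified Lean document; each statement's English description precedes it below -/
import Mathlib

section
/- Let $0 < h < 1$, $0 \le k \le 2$, and let $t \ge \left(\frac{24}{1-h}\ln\frac{12}{1-h}\right)^{\frac{1}{1-h}}$. Then $\max_{1 \le i \le t}\left(i^{-k}\prod_{j=i+1}^t (1-j^{-h})\right) \le 4 t^{-k}$. -/
/-!
For `i ≥ t / 2` the product is at most `1` and `i ^ (-k) ≤ 2 ^ k * t ^ (-k) ≤ 4 * t ^ (-k)`.
For `i < t / 2` the product has at least `t / 2` factors, each at most `1 - t ^ (-h)`, so it is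
at most `exp (-t ^ (1 - h) / 2)`; the lower bound on `t` is what makes
`4 * log t ≤ t ^ (1 - h)`, so this is at most `t ^ (-2) ≤ t ^ (-k)`.
-/

open Real Finset

lemma mul_log_le_self_of_le {c x : ℝ} (hc : 0 < c) (hx : 0 < x)
    (hcx : 2 * c * log (2 * c) ≤ x) : c * log x ≤ x := by
  -- `log x = log (x / 2c) + log 2c ≤ x / 2c - 1 + log 2c`
  have hdiv : log (x / (2 * c)) ≤ x / (2 * c) - 1 := log_le_sub_one_of_pos (by positivity)
  rw [log_div hx.ne' (by positivity)] at hdiv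
  have hscale : c * (x / (2 * c)) = x / 2 := by field_simp
  nlinarith

lemma four_mul_log_le_rpow {u t : ℝ} (hu0 : 0 < u) (hu1 : u ≤ 1) (ht : 0 < t)
    (hbound : ((24 / u) * log (12 / u)) ^ ((1 : ℝ) / u) ≤ t) : 4 * log t ≤ t ^ u := by
  have hlog12 : 0 ≤ log (12 / u) := log_nonneg (by rw [le_div_iff₀ hu0]; linarith)
  have hx : (24 / u) * log (12 / u) ≤ t ^ u := by
    have := rpow_le_rpow (by positivity) hbound hu0.le
    rwa [← rpow_mul (by positivity), one_div_mul_cancel hu0.ne', rpow_one] at this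
  have hlog8 : log (8 / u) ≤ log (12 / u) :=
    log_le_log (by positivity) (div_le_div_of_nonneg_right (by norm_num) hu0.le)
  have hkey : 4 / u * log (t ^ u) ≤ t ^ u := by
    refine mul_log_le_self_of_le (by positivity) (by positivity) (le_trans ?_ hx)
    rw [show 2 * (4 / u) = 8 / u by ring, show (24 : ℝ) / u = 3 * (8 / u) by ring]
    have : 0 ≤ 8 / u := by positivity
    nlinarith
  rwa [log_rpow ht, ← mul_assoc, div_mul_cancel₀ _ hu0.ne'] at hkey

lemma one_sub_rpow_neg_nonneg {x h : ℝ} (hx : 1 ≤ x) (hh : 0 ≤ h) : 0 ≤ 1 - x ^ (-h) :=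
  sub_nonneg.2 (rpow_le_one_of_one_le_of_nonpos hx (neg_nonpos.2 hh))

section Product

variable {h : ℝ} (i t : ℕ)

lemma prod_Icc_one_sub_rpow_nonneg (hh : 0 ≤ h) :
    0 ≤ ∏ j ∈ Icc (i + 1) t, (1 - (j : ℝ) ^ (-h)) :=
  prod_nonneg fun j hj ↦
    one_sub_rpow_neg_nonneg (by norm_cast; grind) hh

lemma prod_Icc_one_sub_rpow_le_one (hh : 0 ≤ h) :
    ∏ j ∈ Icc (i + 1) t, (1 - (j : ℝ) ^ (-h)) ≤ 1 :=
  prod_le_one (fun j hj ↦ one_sub_rpow_neg_nonneg (by norm_cast; grind) hh)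
    fun j _ ↦ sub_le_self _ (rpow_nonneg (Nat.cast_nonneg j) _)

lemma prod_Icc_one_sub_rpow_le_exp (hh : 0 ≤ h) :
    ∏ j ∈ Icc (i + 1) t, (1 - (j : ℝ) ^ (-h)) ≤ exp (-((t - i : ℕ) : ℝ) * (t : ℝ) ^ (-h)) := by
  have hfactor : ∀ j ∈ Icc (i + 1) t, 1 - (j : ℝ) ^ (-h) ≤ exp (-(t : ℝ) ^ (-h)) := by
    intro j hj
    have hj : i + 1 ≤ j ∧ j ≤ t := mem_Icc.1 hj
    have hj0 : (0 : ℝ) < j := by norm_cast; omega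
    have := rpow_le_rpow_of_nonpos hj0 (by exact_mod_cast hj.2 : (j : ℝ) ≤ t) (neg_nonpos.2 hh)
    linarith [one_sub_le_exp_neg ((t : ℝ) ^ (-h))]
  calc ∏ j ∈ Icc (i + 1) t, (1 - (j : ℝ) ^ (-h))
      ≤ ∏ _j ∈ Icc (i + 1) t, exp (-(t : ℝ) ^ (-h)) :=
        prod_le_prod (fun j hj ↦ one_sub_rpow_neg_nonneg (by norm_cast; grind) hh) hfactor
    _ = exp (-((t - i : ℕ) : ℝ) * (t : ℝ) ^ (-h)) := by
        rw [prod_const, Nat.card_Icc, Nat.add_sub_add_right, ← exp_nat_mul, neg_mul_comm]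

lemma prod_Icc_one_sub_rpow_le_rpow_neg_two (hh : 0 ≤ h) (hit : 2 * i < t)
    (hlog : 4 * log t ≤ (t : ℝ) ^ (1 - h)) :
    ∏ j ∈ Icc (i + 1) t, (1 - (j : ℝ) ^ (-h)) ≤ (t : ℝ) ^ (-(2 : ℝ)) := by
  have ht : (0 : ℝ) < t := by norm_cast; omega
  have hhalf : (t : ℝ) / 2 ≤ ((t - i : ℕ) : ℝ) := by
    rw [Nat.cast_sub (by omega)]
    have : ((2 * i : ℕ) : ℝ) < t := by exact_mod_cast hit
    push_cast at this
    linarith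
  have hsplit : (t : ℝ) ^ (1 - h) = t * (t : ℝ) ^ (-h) := by
    rw [sub_eq_add_neg, rpow_add ht, rpow_one]
  have hth : 0 ≤ (t : ℝ) ^ (-h) := rpow_nonneg ht.le _
  refine (prod_Icc_one_sub_rpow_le_exp i t hh).trans ?_
  rw [rpow_def_of_pos ht (-2), exp_le_exp]
  nlinarith

end Product

lemma rpow_neg_le_four_mul_rpow_neg {k x y : ℝ} (hk0 : 0 ≤ k) (hk2 : k ≤ 2) (hy : 0 < y)
    (hxy : y ≤ 2 * x) : x ^ (-k) ≤ 4 * y ^ (-k) :=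
  calc x ^ (-k) ≤ (y / 2) ^ (-k) :=
        rpow_le_rpow_of_nonpos (by positivity) (by linarith) (neg_nonpos.2 hk0)
    _ = 2 ^ k * y ^ (-k) := by
        rw [div_rpow hy.le zero_le_two, rpow_neg zero_le_two, div_inv_eq_mul, mul_comm]
    _ ≤ 2 ^ (2 : ℝ) * y ^ (-k) := by gcongr; norm_num
    _ = 4 * y ^ (-k) := by norm_num

theorem stmt_1 (h k : ℝ) (hh0 : 0 < h) (hh1 : h < 1) (hk0 : 0 ≤ k) (hk2 : k ≤ 2)
    (t : ℕ) (ht : ((24 / (1 - h)) * Real.log (12 / (1 - h))) ^ ((1:ℝ) / (1 - h)) ≤ (t : ℝ)) :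
    ∀ i ∈ Finset.Icc 1 t,
      (i : ℝ) ^ (-k) * ∏ j ∈ Finset.Icc (i + 1) t, (1 - (j : ℝ) ^ (-h))
        ≤ 4 * (t : ℝ) ^ (-k) := by
  intro i hi
  obtain ⟨hi1, hit⟩ := mem_Icc.1 hi
  have hi1' : (1 : ℝ) ≤ i := by exact_mod_cast hi1
  have ht1 : (1 : ℝ) ≤ t := by exact_mod_cast hi1.trans hit
  have hprod0 := prod_Icc_one_sub_rpow_nonneg i t hh0.le
  have hprod1 := prod_Icc_one_sub_rpow_le_one i t hh0.le
  have hik : 0 ≤ (i : ℝ) ^ (-k) := rpow_nonneg (by linarith) _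
  rcases le_or_gt t (2 * i) with hlarge | hsmall
  · have := rpow_neg_le_four_mul_rpow_neg hk0 hk2 (by linarith : (0 : ℝ) < t)
      (by exact_mod_cast hlarge : (t : ℝ) ≤ 2 * (i : ℝ))
    nlinarith
  · have hlog := four_mul_log_le_rpow (by linarith) (by linarith) (by linarith) ht
    have hprod := prod_Icc_one_sub_rpow_le_rpow_neg_two i t hh0.le hsmall hlog
    have htk : (t : ℝ) ^ (-(2 : ℝ)) ≤ (t : ℝ) ^ (-k) :=
      rpow_le_rpow_of_exponent_le ht1 (by linarith)
    have hik1 : (i : ℝ) ^ (-k) ≤ 1 := rpow_le_one_of_one_le_of_nonpos hi1' (by linarith)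
    have ht0 : 0 ≤ (t : ℝ) ^ (-k) := rpow_nonneg (by linarith) _
    nlinarith
end

section
/- Let $\Omega \subseteq \Delta_{\mathcal{A}}$ be a convex subset of the probability simplex over a finite set $\mathcal{A}$, let $x \in \Omega$ have all coordinates positive, let $\ell \in [0,\infty)^{\mathcal{A}}$, $\eta > 0$, and $\epsilon \in [0, 1/\eta]^{\mathcal{A}}$. Define $x' = \arg\min_{\tilde{x} \in \Omega}\left\{ \sum_{a} \tilde{x}_a(\ell_a + \epsilon_a \ln x_a) + \frac{1}{\eta}\mathrm{KL}(\tilde{x}, x)\right\}$. Then for any $u \in \Omega$, $(x-u)^{\top}(\ell + \epsilon \ln x) \le \frac{\mathrm{KL}(u,x) - \mathrm{KL}(u,x')}{\eta} + \eta \sum_a x_a \ell_a^2 + \eta \sum_a \epsilon_a^2 \ln^2 x_a$. -/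
/-!
Write `g = ℓ + ε ln x`. Because `p ↦ p ln p` has slope `-∞` at `0`, the minimizer `x'` has
positive coordinates; the first-order optimality condition at `x'` together with the three-point
identity for `KL` then gives `⟪x' - u, g⟫ ≤ (KL(u,x) - KL(u,x') - KL(x',x)) / η`.
The remaining term `⟪x - x', g⟫ - KL(x',x) / η` splits into coordinates; maximizing each over
`x'_a` (the convex conjugate of `p ln (p / x_a)`) bounds it by `x_a (e^{-η g_a} - 1 + η g_a) / η`.
This is at most `η x_a ℓ_a²` when `g_a ≥ 0`, by `e^{-w} - 1 + w ≤ w²`, and at most `η ε_a² ln² x_a`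
when `g_a < 0`, since then `x_a ≤ e^{-η ε_a |ln x_a|}` because `η ε_a ≤ 1`.
-/

open Finset

noncomputable def KLdiv {A : Type*} [Fintype A] (p q : A → ℝ) : ℝ :=
  ∑ a, p a * Real.log (p a / q a)

open Real Set Filter Topology

lemma exp_neg_sub_one_add_le_sq {w : ℝ} (hw : 0 ≤ w) : exp (-w) - 1 + w ≤ w ^ 2 := by
  have h : exp (-w) * exp w = 1 := by rw [← exp_add]; simp
  nlinarith [h, add_one_le_exp w, add_one_le_exp (-w), exp_pos (-w)]

lemma sub_mul_sub_mul_log_div_le {x p : ℝ} (hx : 0 < x) (hp : 0 ≤ p) (G : ℝ) :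
    (x - p) * G - p * log (p / x) + p - x ≤ x * (exp (-G) - 1 + G) := by
  suffices p * (-G - log (p / x) + 1) ≤ x * exp (-G) by linarith
  rcases hp.eq_or_lt with rfl | hp
  · rw [zero_mul]; positivity
  calc p * (-G - log (p / x) + 1) ≤ p * exp (-G - log (p / x)) :=
        mul_le_mul_of_nonneg_left (add_one_le_exp _) hp.le
    _ = x * exp (-G) := by
        rw [exp_sub, exp_log (by positivity)]; field_simp

lemma mul_exp_neg_sub_one_add_le {x A s : ℝ} (hx : 0 < x) (hA : 0 ≤ A) (hs : 0 ≤ s)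
    (hsx : s ≤ -log x) :
    x * (exp (-(A - s)) - 1 + (A - s)) ≤ x * A ^ 2 + s ^ 2 := by
  rcases le_or_gt s A with hsA | hAs
  · have h := exp_neg_sub_one_add_le_sq (sub_nonneg.2 hsA)
    have hsq : (A - s) ^ 2 ≤ A ^ 2 := by nlinarith
    nlinarith [mul_le_mul_of_nonneg_left (h.trans hsq) hx.le, sq_nonneg s]
  · obtain ⟨d, hd, rfl⟩ : ∃ d, 0 < d ∧ s = A + d := ⟨s - A, by linarith, by ring⟩
    have hxs : x ≤ exp (-(A + d)) := by
      rw [← exp_log hx]; exact exp_le_exp.2 (by linarith)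
    have hψ : 0 ≤ exp d - 1 - d := by linarith [add_one_le_exp d]
    have hexp : exp (-(A + d)) = exp (-A) * exp (-d) := by rw [← exp_add]; ring_nf
    have hinv : exp d * exp (-d) = 1 := by rw [← exp_add]; simp
    -- `exp (-d) ≥ 1 - d` gives `exp (-d) * (1 + d) ≥ 1 - d ^ 2`
    have hd2 : 1 - exp (-d) * (1 + d) ≤ d ^ 2 := by nlinarith [add_one_le_exp (-d)]
    calc x * (exp (-(A - (A + d))) - 1 + (A - (A + d))) = x * (exp d - 1 - d) := by ring_nf
      _ ≤ exp (-(A + d)) * (exp d - 1 - d) := mul_le_mul_of_nonneg_right hxs hψ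
      _ = exp (-A) * (1 - exp (-d) * (1 + d)) := by rw [hexp]; linear_combination exp (-A) * hinv
      _ ≤ 1 * d ^ 2 := mul_le_mul (exp_le_one_iff.2 (by linarith)) hd2
          (by nlinarith [add_one_le_exp d, exp_pos (-d)]) zero_le_one
      _ ≤ x * A ^ 2 + (A + d) ^ 2 := by nlinarith [mul_nonneg hx.le (sq_nonneg A)]

lemma sub_mul_add_mul_log_le {x p ℓ ε η : ℝ} (hx : 0 < x) (hx1 : x ≤ 1) (hp : 0 ≤ p)
    (hℓ : 0 ≤ ℓ) (hη : 0 < η) (hε : 0 ≤ ε) (hεη : ε ≤ 1 / η) :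
    (x - p) * (ℓ + ε * log x) ≤
      (p * log (p / x) + (x - p)) / η + η * (x * ℓ ^ 2) + η * (ε ^ 2 * log x ^ 2) := by
  have hlog : log x ≤ 0 := log_nonpos hx.le hx1
  have hηε : η * ε ≤ 1 := by rwa [le_div_iff₀' hη] at hεη
  have h := (sub_mul_sub_mul_log_div_le hx hp (η * ℓ - η * ε * -log x)).trans
    (mul_exp_neg_sub_one_add_le hx (by positivity)
      (mul_nonneg (mul_nonneg hη.le hε) (neg_nonneg.2 hlog)) (by nlinarith))
  rw [← mul_le_mul_iff_of_pos_left hη]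
  field_simp
  nlinarith [h]

lemma convexOn_mul_log_div {q : ℝ} (hq : 0 < q) :
    ConvexOn ℝ (Ici 0) fun p => p * log (p / q) := by
  refine (convexOn_mul_log.add ((LinearMap.mul ℝ ℝ (-log q)).convexOn (convex_Ici 0))).congr
    fun p _ => ?_
  rcases eq_or_ne p 0 with rfl | hp
  · simp
  · simp only [Pi.add_apply, LinearMap.mul_apply', log_div hp hq.ne']; ring

lemma hasDerivAt_mul_log_div {p q : ℝ} (hp : p ≠ 0) (hq : q ≠ 0) :
    HasDerivAt (fun p => p * log (p / q)) (log (p / q) + 1) p := by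
  refine ((hasDerivAt_id' p).fun_mul (((hasDerivAt_id' p).div_const q).log
    (div_ne_zero hp hq))).congr_deriv ?_
  field_simp

section

variable {A : Type*} [Fintype A]

lemma KLdiv_segment_le_of_eq_zero {p q : A → ℝ} (hp : ∀ a, 0 ≤ p a) (hq : ∀ a, 0 < q a)
    {a₀ : A} (hpa₀ : p a₀ = 0) {t : ℝ} (ht0 : 0 < t) (ht1 : t ≤ 1) :
    KLdiv ((1 - t) • p + t • q) q ≤ (1 - t) * KLdiv p q + t * q a₀ * log t := by
  classical
  set φ : A → ℝ → ℝ := fun a r => r * log (r / q a)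
  have hz : ∀ a, ((1 - t) • p + t • q) a = (1 - t) * p a + t * q a := fun a => rfl
  have hcoord : ∀ a, φ a ((1 - t) * p a + t * q a) ≤ (1 - t) * φ a (p a) := fun a => by
    simpa [φ, div_self (hq a).ne'] using (convexOn_mul_log_div (hq a)).2 (hp a) (hq a).le
      (sub_nonneg.2 ht1) ht0.le (by ring)
  have ha₀ : φ a₀ ((1 - t) * p a₀ + t * q a₀) = t * q a₀ * log t := by
    simp [φ, hpa₀, mul_div_assoc, div_self (hq a₀).ne']
  calc KLdiv ((1 - t) • p + t • q) q
      = φ a₀ ((1 - t) * p a₀ + t * q a₀)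
          + ∑ a ∈ univ.erase a₀, φ a ((1 - t) * p a + t * q a) := by
        rw [KLdiv, ← add_sum_erase _ _ (mem_univ a₀)]; rfl
    _ ≤ t * q a₀ * log t + ∑ a ∈ univ.erase a₀, (1 - t) * φ a (p a) := by
        rw [ha₀]; exact add_le_add le_rfl (sum_le_sum fun a _ => hcoord a)
    _ = (1 - t) * KLdiv p q + t * q a₀ * log t := by
        rw [← mul_sum, KLdiv, ← add_sum_erase _ _ (mem_univ a₀)]
        simp only [φ, hpa₀, zero_mul, zero_add]; ring

noncomputable def proxObj (g : A → ℝ) (c : ℝ) (x z : A → ℝ) : ℝ :=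
  ∑ a, z a * g a + c * KLdiv z x

variable {Ω : Set (A → ℝ)} {g x x' u : A → ℝ} {c : ℝ}

lemma proxObj_segment_le {t : ℝ} (hc : 0 < c) (hx'nn : ∀ a, 0 ≤ x' a) (hxpos : ∀ a, 0 < x a)
    {a₀ : A} (hx'a₀ : x' a₀ = 0) (ht0 : 0 < t) (ht1 : t ≤ 1) :
    proxObj g c x ((1 - t) • x' + t • x) ≤
      (1 - t) * proxObj g c x x' + t * (∑ a, x a * g a + c * x a₀ * log t) := by
  have hKL := mul_le_mul_of_nonneg_left
    (KLdiv_segment_le_of_eq_zero hx'nn hxpos hx'a₀ ht0 ht1) hc.le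
  have hlin : ∑ a, ((1 - t) • x' + t • x) a * g a =
      (1 - t) * ∑ a, x' a * g a + t * ∑ a, x a * g a := by
    simp only [mul_sum, ← sum_add_distrib, Pi.add_apply, Pi.smul_apply, smul_eq_mul]
    exact sum_congr rfl fun a _ => by ring
  simp only [proxObj, hlin]
  linarith

lemma pos_of_isMinOn_proxObj (hΩ : Convex ℝ Ω) (hΩnn : ∀ p ∈ Ω, ∀ a, 0 ≤ p a) (hc : 0 < c)
    (hx : x ∈ Ω) (hxpos : ∀ a, 0 < x a) (hx' : x' ∈ Ω) (hmin : IsMinOn (proxObj g c x) Ω x')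
    (a₀ : A) : 0 < x' a₀ := by
  refine (hΩnn x' hx' a₀).lt_of_ne' fun hx'a₀ => ?_
  have hbound : ∀ t ∈ Ioo (0 : ℝ) 1,
      proxObj g c x x' ≤ ∑ a, x a * g a + c * x a₀ * log t := by
    rintro t ⟨ht0, ht1⟩
    have hle := (isMinOn_iff.1 hmin _ (hΩ hx' hx (sub_nonneg.2 ht1.le) ht0.le (by ring))).trans
      (proxObj_segment_le hc (hΩnn x' hx') hxpos hx'a₀ ht0 ht1.le)
    exact le_of_mul_le_mul_left (by linarith) ht0
  have hlim : Tendsto (fun t => ∑ a, x a * g a + c * x a₀ * log t) (𝓝[>] 0) atBot :=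
    tendsto_atBot_add_const_left _ _
      (tendsto_log_nhdsGT_zero.const_mul_atBot (mul_pos hc (hxpos a₀)))
  obtain ⟨t, hlt, ht⟩ :=
    ((hlim.eventually (eventually_lt_atBot _)).and (Ioo_mem_nhdsGT one_pos)).exists
  exact (hbound t ht).not_gt hlt

lemma hasFDerivAt_proxObj (hxpos : ∀ a, 0 < x a) (hx'pos : ∀ a, 0 < x' a) :
    HasFDerivAt (proxObj g c x)
      (∑ a, (g a + c * (log (x' a / x a) + 1)) •
        (ContinuousLinearMap.proj a : (A → ℝ) →L[ℝ] ℝ)) x' := by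
  have hsplit : proxObj g c x = fun z => ∑ a, (z a * g a + c * (z a * log (z a / x a))) := by
    ext z; simp only [proxObj, KLdiv, sum_add_distrib, mul_sum]
  rw [hsplit]
  refine HasFDerivAt.fun_sum fun a _ => ?_
  have h : HasDerivAt (fun p => p * g a + c * (p * log (p / x a)))
      (g a + c * (log (x' a / x a) + 1)) (x' a) := by
    simpa using ((hasDerivAt_id' (x' a)).mul_const (g a)).fun_add
      ((hasDerivAt_mul_log_div (hx'pos a).ne' (hxpos a).ne').const_mul c)
  exact h.comp_hasFDerivAt x' (hasFDerivAt_apply (𝕜 := ℝ) (F' := fun _ : A => ℝ) a x')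

lemma sum_sub_mul_nonneg_of_isMinOn_proxObj (hΩ : Convex ℝ Ω) (hxpos : ∀ a, 0 < x a)
    (hx' : x' ∈ Ω) (hx'pos : ∀ a, 0 < x' a) (hmin : IsMinOn (proxObj g c x) Ω x') (hu : u ∈ Ω)
    (hsum : ∑ a, u a = ∑ a, x' a) :
    0 ≤ ∑ a, (u a - x' a) * (g a + c * log (x' a / x a)) := by
  have h := hmin.localize.hasFDerivWithinAt_nonneg
    (hasFDerivAt_proxObj (g := g) (c := c) hxpos hx'pos).hasFDerivWithinAt
    (sub_mem_posTangentConeAt_of_segment_subset (hΩ.segment_subset hx' hu))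
  have hconst : ∑ a, (u a - x' a) * c = 0 := by
    rw [← sum_mul, sum_sub_distrib, hsum, sub_self, zero_mul]
  simp only [FunLike.coe_sum, Finset.sum_apply, FunLike.coe_smul,
    Pi.smul_apply, ContinuousLinearMap.proj_apply, Pi.sub_apply, smul_eq_mul] at h
  calc 0 ≤ _ := h
    _ = ∑ a, (u a - x' a) * (g a + c * log (x' a / x a)) + ∑ a, (u a - x' a) * c := by
        rw [← sum_add_distrib]; exact sum_congr rfl fun a _ => by ring
    _ = _ := by rw [hconst, add_zero]

lemma sum_sub_mul_log_div_eq {x x' : A → ℝ} (hxpos : ∀ a, 0 < x a) (hx'pos : ∀ a, 0 < x' a)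
    (u : A → ℝ) :
    ∑ a, (u a - x' a) * log (x' a / x a) = KLdiv u x - KLdiv u x' - KLdiv x' x := by
  simp only [KLdiv, ← sum_sub_distrib]
  refine sum_congr rfl fun a _ => ?_
  rcases eq_or_ne (u a) 0 with hu | hu
  · simp [hu]
  · rw [log_div hu (hxpos a).ne', log_div hu (hx'pos a).ne', log_div (hx'pos a).ne' (hxpos a).ne']
    ring

lemma sum_sub_mul_le_of_isMinOn_proxObj (hΩ : Convex ℝ Ω) (hxpos : ∀ a, 0 < x a)
    (hx' : x' ∈ Ω) (hx'pos : ∀ a, 0 < x' a) (hmin : IsMinOn (proxObj g c x) Ω x') (hu : u ∈ Ω)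
    (hsum : ∑ a, u a = ∑ a, x' a) :
    ∑ a, (x' a - u a) * g a ≤ c * (KLdiv u x - KLdiv u x' - KLdiv x' x) := by
  rw [← sum_sub_mul_log_div_eq hxpos hx'pos, mul_sum, ← sub_nonneg, ← sum_sub_distrib]
  exact (sum_sub_mul_nonneg_of_isMinOn_proxObj hΩ hxpos hx' hx'pos hmin hu hsum).trans_eq
    (sum_congr rfl fun a _ => by ring)

lemma sum_sub_mul_le_KLdiv_div_add {x p ℓ ε : A → ℝ} {η : ℝ} (hxpos : ∀ a, 0 < x a)
    (hx1 : ∀ a, x a ≤ 1) (hp : ∀ a, 0 ≤ p a) (hsum : ∑ a, p a = ∑ a, x a) (hℓ : ∀ a, 0 ≤ ℓ a)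
    (hη : 0 < η) (hε : ∀ a, 0 ≤ ε a ∧ ε a ≤ 1 / η) :
    ∑ a, (x a - p a) * (ℓ a + ε a * log (x a)) ≤
      KLdiv p x / η + η * ∑ a, x a * ℓ a ^ 2 + η * ∑ a, ε a ^ 2 * log (x a) ^ 2 := by
  calc ∑ a, (x a - p a) * (ℓ a + ε a * log (x a))
      ≤ ∑ a, ((p a * log (p a / x a) + (x a - p a)) / η + η * (x a * ℓ a ^ 2)
          + η * (ε a ^ 2 * log (x a) ^ 2)) :=
        sum_le_sum fun a _ => sub_mul_add_mul_log_le (hxpos a) (hx1 a) (hp a) (hℓ a) hη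
          (hε a).1 (hε a).2
    _ = (KLdiv p x + (∑ a, x a - ∑ a, p a)) / η + η * ∑ a, x a * ℓ a ^ 2
          + η * ∑ a, ε a ^ 2 * log (x a) ^ 2 := by
        simp only [sum_add_distrib, ← sum_div, ← mul_sum, sum_sub_distrib, KLdiv]
    _ = _ := by rw [hsum, sub_self, add_zero]

end

theorem stmt_6 {A : Type*} [Fintype A]
    (Ω : Set (A → ℝ))
    (hΩconv : Convex ℝ Ω)
    (hΩsub : ∀ p ∈ Ω, (∀ a, 0 ≤ p a) ∧ ∑ a, p a = 1)
    (x : A → ℝ) (hxΩ : x ∈ Ω) (hxpos : ∀ a, 0 < x a)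
    (ℓ : A → ℝ) (hℓ : ∀ a, 0 ≤ ℓ a)
    (η : ℝ) (hη : 0 < η)
    (ε : A → ℝ) (hε : ∀ a, 0 ≤ ε a ∧ ε a ≤ 1 / η)
    (x' : A → ℝ) (hx'Ω : x' ∈ Ω)
    (hargmin : ∀ z ∈ Ω,
      (∑ a, x' a * (ℓ a + ε a * Real.log (x a))) + (1 / η) * KLdiv x' x
        ≤ (∑ a, z a * (ℓ a + ε a * Real.log (x a))) + (1 / η) * KLdiv z x) :
    ∀ u ∈ Ω,
      ∑ a, (x a - u a) * (ℓ a + ε a * Real.log (x a))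
        ≤ (KLdiv u x - KLdiv u x') / η
          + η * ∑ a, x a * (ℓ a) ^ 2
          + η * ∑ a, (ε a) ^ 2 * (Real.log (x a)) ^ 2 := by
  intro u hu
  have hmin : IsMinOn (proxObj (fun a => ℓ a + ε a * log (x a)) (1 / η) x) Ω x' :=
    isMinOn_iff.2 hargmin
  have hx'pos := pos_of_isMinOn_proxObj hΩconv (fun p hp => (hΩsub p hp).1) (one_div_pos.2 hη)
    hxΩ hxpos hx'Ω hmin
  have hsum : ∀ p ∈ Ω, ∑ a, p a = ∑ a, x a := fun p hp =>
    (hΩsub p hp).2.trans (hΩsub x hxΩ).2.symm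
  have hx1 : ∀ a, x a ≤ 1 := fun a =>
    (hΩsub x hxΩ).2 ▸ single_le_sum (fun b _ => (hxpos b).le) (mem_univ a)
  have hopt := sum_sub_mul_le_of_isMinOn_proxObj hΩconv hxpos hx'Ω hx'pos hmin hu
    ((hsum u hu).trans (hsum x' hx'Ω).symm)
  have hstab := sum_sub_mul_le_KLdiv_div_add hxpos hx1 (hΩsub x' hx'Ω).1 (hsum x' hx'Ω) hℓ hη hε
  calc ∑ a, (x a - u a) * (ℓ a + ε a * log (x a))
      = ∑ a, (x a - x' a) * (ℓ a + ε a * log (x a))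
          + ∑ a, (x' a - u a) * (ℓ a + ε a * log (x a)) := by
        rw [← sum_add_distrib]; exact sum_congr rfl fun a _ => by ring
    _ ≤ (KLdiv x' x / η + η * ∑ a, x a * ℓ a ^ 2 + η * ∑ a, ε a ^ 2 * log (x a) ^ 2)
          + 1 / η * (KLdiv u x - KLdiv u x' - KLdiv x' x) := add_le_add hstab hopt
    _ = _ := by ring
end

section
/- Let $\alpha_\tau = \frac{H+1}{H+\tau}$ for $\tau \ge 1$ and some $H \ge 1$, and define $\alpha^i_\tau = \alpha_i \prod_{j=i+1}^{\tau}(1-\alpha_j)$ for $1 \le i \le \tau$. Then $\sum_{i=1}^{\tau} \alpha^i_\tau = 1$ for every $\tau \ge 1$, and for every $i \ge 1$, $\sum_{\tau=i}^{\infty}\alpha^i_\tau \le 1 + \frac{1}{H}$. -/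
/-!
The weight `w i τ = α i * ∏_{i < j ≤ τ} (1 - α j)` is the probability that, among independent
events of probabilities `α 1, …, α τ`, the last one to occur is the `i`-th. Hence the weights sum
to `1 - ∏_{j ≤ τ} (1 - α j)`, which is `1` because `α 1 = 1`.

For the second bound, `(H + τ + 1) (1 - α (τ + 1)) = τ`, so `b τ := (H + τ) / H * w i τ`
satisfies `w i τ = b τ - b (τ + 1)` for `τ ≥ i`: the column sum telescopes and is at most
`b i = (H + 1) / H`.
-/

open Finset

theorem sum_mul_prod_Icc_one_sub {R : Type*} [CommRing R] (α : ℕ → R) (a τ : ℕ) :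
    ∑ i ∈ Icc a τ, α i * ∏ j ∈ Icc (i + 1) τ, (1 - α j) = 1 - ∏ j ∈ Icc a τ, (1 - α j) := by
  induction τ with
  | zero =>
    rcases Nat.eq_zero_or_pos a with rfl | ha
    · simp
    · simp [Icc_eq_empty_of_lt ha]
  | succ τ ih =>
    rcases le_or_gt a (τ + 1) with ha | ha
    · have hstep : ∀ i ∈ Icc a τ, α i * ∏ j ∈ Icc (i + 1) (τ + 1), (1 - α j)
          = (α i * ∏ j ∈ Icc (i + 1) τ, (1 - α j)) * (1 - α (τ + 1)) := fun i hi => by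
        rw [prod_Icc_succ_top (by grind), mul_assoc]
      rw [sum_Icc_succ_top ha, prod_Icc_succ_top ha, sum_congr rfl hstep, ← sum_mul, ih]
      simp only [Icc_eq_empty_of_lt (Nat.lt_succ_self _), prod_empty]
      ring
    · simp [Icc_eq_empty_of_lt ha]

theorem tsum_sub_succ_le_of_antitone {b : ℕ → ℝ} (hb : Antitone b) (hb0 : ∀ n, 0 ≤ b n) :
    ∑' n, (b n - b (n + 1)) ≤ b 0 :=
  Real.tsum_le_of_sum_range_le (fun n => sub_nonneg.2 (hb n.le_succ)) fun n => by
    rw [sum_range_sub']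
    linarith [hb0 n]

namespace LearningRate

noncomputable def rate (H : ℝ) (τ : ℕ) : ℝ := (H + 1) / (H + τ)

noncomputable def weight (H : ℝ) (i τ : ℕ) : ℝ := rate H i * ∏ j ∈ Icc (i + 1) τ, (1 - rate H j)

variable {H : ℝ}

theorem rate_one (hH : H + 1 ≠ 0) : rate H 1 = 1 := by
  rw [rate, Nat.cast_one, div_self hH]

theorem rate_nonneg (hH : 0 ≤ H) (τ : ℕ) : 0 ≤ rate H τ := by
  unfold rate
  positivity

theorem add_mul_one_sub_rate_succ (hH : 0 ≤ H) (τ : ℕ) :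
    (H + (τ + 1 : ℕ)) * (1 - rate H (τ + 1)) = τ := by
  rw [rate, mul_one_sub, mul_div_cancel₀ _ (by positivity)]
  push_cast
  ring

theorem weight_of_le {i τ : ℕ} (hτi : τ ≤ i) : weight H i τ = rate H i := by
  rw [weight, Icc_eq_empty (by omega), prod_empty, mul_one]

theorem add_mul_weight_succ (hH : 0 ≤ H) {i τ : ℕ} (hiτ : i ≤ τ) :
    (H + (τ + 1 : ℕ)) * weight H i (τ + 1) = τ * weight H i τ := by
  rw [weight, weight, prod_Icc_succ_top (by omega)]
  linear_combination (rate H i * ∏ j ∈ Icc (i + 1) τ, (1 - rate H j)) * add_mul_one_sub_rate_succ hH τ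

theorem weight_nonneg (hH : 0 ≤ H) (i τ : ℕ) : 0 ≤ weight H i τ := by
  rcases le_total τ i with hτi | hiτ
  · exact weight_of_le hτi ▸ rate_nonneg hH i
  induction τ, hiτ using Nat.le_induction with
  | base => exact weight_of_le le_rfl ▸ rate_nonneg hH i
  | succ τ hiτ ih =>
    refine nonneg_of_mul_nonneg_right ?_ (by positivity : 0 < H + (τ + 1 : ℕ))
    rw [add_mul_weight_succ hH hiτ]
    positivity

theorem sum_weight (hH : H + 1 ≠ 0) {τ : ℕ} (hτ : 1 ≤ τ) : ∑ i ∈ Icc 1 τ, weight H i τ = 1 := by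
  simp only [weight, sum_mul_prod_Icc_one_sub]
  rw [prod_eq_zero (i := 1) (by simp [hτ]) (by simp [rate_one hH]), sub_zero]

theorem weight_eq_sub_succ (hH : 0 < H) {i τ : ℕ} (hiτ : i ≤ τ) :
    weight H i τ = (H + τ) / H * weight H i τ - (H + (τ + 1 : ℕ)) / H * weight H i (τ + 1) := by
  rw [div_mul_eq_mul_div, div_mul_eq_mul_div, add_mul_weight_succ hH.le hiτ]
  field_simp
  ring

theorem tsum_weight_le (hH : 0 < H) (i : ℕ) :
    ∑' τ : ℕ, (if i ≤ τ then weight H i τ else 0) ≤ 1 + 1 / H := by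
  set b : ℕ → ℝ := fun τ => (H + max τ i) / H * weight H i (max τ i) with hb
  have hb_sub : ∀ τ, b τ - b (τ + 1) = if i ≤ τ then weight H i τ else 0 := by
    intro τ
    split_ifs with hiτ
    · simp only [hb, max_eq_left hiτ, max_eq_left (hiτ.trans τ.le_succ)]
      exact (weight_eq_sub_succ hH hiτ).symm
    · rw [not_le] at hiτ
      simp only [hb, max_eq_right hiτ.le, max_eq_right (Nat.succ_le_of_lt hiτ), sub_self]
  have hb_nonneg : ∀ τ, 0 ≤ b τ := fun τ => by
    have := weight_nonneg hH.le i (max τ i)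
    positivity
  have hb_anti : Antitone b := antitone_nat_of_succ_le fun τ => by
    have := hb_sub τ
    split_ifs at this
    exacts [by linarith [weight_nonneg hH.le i τ], by linarith]
  calc ∑' τ : ℕ, (if i ≤ τ then weight H i τ else 0) = ∑' τ, (b τ - b (τ + 1)) := by
        simp only [hb_sub]
    _ ≤ b 0 := tsum_sub_succ_le_of_antitone hb_anti hb_nonneg
    _ = 1 + 1 / H := by
      have : H + i ≠ 0 := by positivity
      simp only [hb, Nat.zero_max, weight_of_le le_rfl, rate]
      field_simp

end LearningRate

theorem stmt_11 (H : ℝ) (hH : 1 ≤ H)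
    (α : ℕ → ℝ) (hα : ∀ τ, α τ = (H + 1) / (H + τ))
    (w : ℕ → ℕ → ℝ)
    (hw : ∀ i τ, w i τ = α i * ∏ j ∈ Finset.Icc (i + 1) τ, (1 - α j)) :
    (∀ τ, 1 ≤ τ → ∑ i ∈ Finset.Icc 1 τ, w i τ = 1) ∧
    (∀ i, 1 ≤ i → ∑' τ : ℕ, (if i ≤ τ then w i τ else 0) ≤ 1 + 1 / H) := by
  obtain rfl : α = LearningRate.rate H := funext hα
  obtain rfl : w = LearningRate.weight H := funext fun i => funext (hw i)
  exact ⟨fun τ hτ => LearningRate.sum_weight (by linarith) hτ,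
    fun i _ => LearningRate.tsum_weight_le (by linarith) i⟩
end

section
/- Consider an infinite-horizon discounted two-player zero-sum Markov game with discount $\gamma \in [0,1)$ and losses in $[0,1]$. For any pair of stationary policies $(x,y)$, the duality gap of the game satisfies $\max_{s,x',y'}(V^s_{x,y'} - V^s_{x',y}) \le \frac{2}{1-\gamma}\max_{s,x',y'}(x^{s\top} Q^s_\star y'^s - x'^{s\top} Q^s_\star y^s)$, where $Q^s_\star$ is the Nash equilibrium Q-function. -/
/-!
Fix the equilibrium value `V⋆`. For any policy pair `(p, q)`, the Bellman equations of `V_{p,q}`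
and the definition of `Q⋆` show that `U = V_{p,q} - V⋆` solves `U = c + γ T U`, where `T` is the
state-transition matrix of `(p, q)` and `c s = p^sᵀ Q⋆^s q^s - V⋆ s`; as `T` is row-stochastic,
`c ≤ d` forces `U ≤ d / (1 - γ)`. The equilibrium property, applied to a deviation from
`(x⋆, y⋆)` at a single state, gives `x⋆^sᵀ Q⋆^s y'^s ≤ V⋆ s ≤ x'^sᵀ Q⋆^s y⋆^s`, which turns the
per-state gap bound into `c ≤ M` for `(x, y')` and `-c ≤ M` for `(x', y)`; adding the two
resulting bounds gives the factor `2 / (1 - γ)`.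
-/

/-- A stationary (mixed) policy: a distribution over actions at each state. -/
def IsPolicy {S A : Type*} [Fintype A] (x : S → A → ℝ) : Prop :=
  ∀ s, (∀ a, 0 ≤ x s a) ∧ ∑ a, x s a = 1

open Matrix Finset

section RowStochastic

variable {n : Type*} [Fintype n] {M : Matrix n n ℝ} {γ : ℝ} {U c : n → ℝ}

lemma neg_eq_neg_add_smul_mulVec_neg (hU : U = c + γ • M *ᵥ U) :
    -U = -c + γ • M *ᵥ -U := by
  rw [mulVec_neg, smul_neg, ← neg_add, ← hU]

variable [DecidableEq n]

lemma mulVec_apply_le_of_mem_rowStochastic (hM : M ∈ rowStochastic ℝ n) {v : n → ℝ} {C : ℝ}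
    (hv : ∀ j, v j ≤ C) (i : n) : (M *ᵥ v) i ≤ C :=
  calc (M *ᵥ v) i = ∑ j, M i j * v j := rfl
    _ ≤ ∑ j, M i j * C :=
      sum_le_sum fun j _ => mul_le_mul_of_nonneg_left (hv j) (nonneg_of_mem_rowStochastic hM)
    _ = C := by rw [← sum_mul, sum_row_of_mem_rowStochastic hM, one_mul]

lemma le_div_one_sub_of_eq_add_smul_mulVec (hM : M ∈ rowStochastic ℝ n) (hγ0 : 0 ≤ γ)
    (hγ1 : γ < 1) (hU : U = c + γ • M *ᵥ U) {d : ℝ} (hc : ∀ i, c i ≤ d) (i : n) :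
    U i ≤ d / (1 - γ) := by
  have : Nonempty n := ⟨i⟩
  obtain ⟨k, hk⟩ := Finite.exists_max U
  have hUk : U k ≤ d + γ * U k :=
    calc U k = c k + γ * (M *ᵥ U) k := congrFun hU k
      _ ≤ d + γ * U k := add_le_add (hc k)
        (mul_le_mul_of_nonneg_left (mulVec_apply_le_of_mem_rowStochastic hM hk k) hγ0)
  rw [le_div_iff₀ (sub_pos.2 hγ1)]
  calc U i * (1 - γ) ≤ U k * (1 - γ) := mul_le_mul_of_nonneg_right (hk i) (by linarith)
    _ ≤ d := by linarith

lemma eq_zero_of_eq_add_smul_mulVec_of_nonneg (hM : M ∈ rowStochastic ℝ n) (hγ0 : 0 ≤ γ)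
    (hγ1 : γ < 1) (hU : U = c + γ • M *ᵥ U) (hU0 : 0 ≤ U) (hc : c ≤ 0) : c = 0 := by
  have hU_eq : U = 0 := le_antisymm (fun i => by
    simpa using le_div_one_sub_of_eq_add_smul_mulVec hM hγ0 hγ1 hU (d := 0) hc i) hU0
  simpa [hU_eq] using hU.symm

lemma nonneg_of_eq_add_smul_mulVec_of_nonneg (hM : M ∈ rowStochastic ℝ n) (hγ0 : 0 ≤ γ)
    (hγ1 : γ < 1) (hU : U = c + γ • M *ᵥ U) (hU0 : 0 ≤ U) {i : n} (hc : ∀ j ≠ i, c j = 0) :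
    0 ≤ c i := by
  by_contra! hi
  have hc0 : c ≤ 0 := fun j => by
    rcases eq_or_ne j i with rfl | hj
    · exact hi.le
    · exact (hc j hj).le
  exact hi.ne (congrFun (eq_zero_of_eq_add_smul_mulVec_of_nonneg hM hγ0 hγ1 hU hU0 hc0) i)

lemma nonpos_of_eq_add_smul_mulVec_of_nonpos (hM : M ∈ rowStochastic ℝ n) (hγ0 : 0 ≤ γ)
    (hγ1 : γ < 1) (hU : U = c + γ • M *ᵥ U) (hU0 : U ≤ 0) {i : n} (hc : ∀ j ≠ i, c j = 0) :
    c i ≤ 0 := by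
  simpa using nonneg_of_eq_add_smul_mulVec_of_nonneg hM hγ0 hγ1
    (neg_eq_neg_add_smul_mulVec_neg hU) (neg_nonneg.2 hU0) (i := i) fun j hj => by simp [hc j hj]

end RowStochastic

section MarkovGame

variable {S A : Type*} [Fintype S] [Fintype A] {γ : ℝ} {G : S → A → A → ℝ}
  {P : S → A → A → S → ℝ} {p q : S → A → ℝ} {Q : S → A → A → ℝ} {W : S → ℝ}

def transitionMatrix (P : S → A → A → S → ℝ) (p q : S → A → ℝ) : Matrix S S ℝ :=
  Matrix.of fun s s' => ∑ a, ∑ b, p s a * q s b * P s a b s'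

/-- `p^sᵀ Q^s q^s` at each state `s`. -/
def payoff (Q : S → A → A → ℝ) (p q : S → A → ℝ) (s : S) : ℝ :=
  ∑ a, ∑ b, p s a * Q s a b * q s b

lemma transitionMatrix_mem_rowStochastic [DecidableEq S]
    (hP : ∀ s a b, (∀ s', 0 ≤ P s a b s') ∧ ∑ s', P s a b s' = 1)
    (hp : IsPolicy p) (hq : IsPolicy q) : transitionMatrix P p q ∈ rowStochastic ℝ S := by
  refine mem_rowStochastic_iff_sum.2 ⟨fun s s' => ?_, fun s => ?_⟩
  · exact sum_nonneg fun a _ => sum_nonneg fun b _ =>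
      mul_nonneg (mul_nonneg ((hp s).1 a) ((hq s).1 b)) ((hP s a b).1 s')
  · simp only [transitionMatrix, of_apply]
    rw [sum_comm]
    refine (sum_congr rfl fun a _ => ?_).trans (hp s).2
    rw [sum_comm]
    simp only [← mul_sum, (hP s _ _).2, mul_one, (hq s).2]

lemma transitionMatrix_mulVec_apply (W : S → ℝ) (s : S) :
    (transitionMatrix P p q *ᵥ W) s = ∑ a, ∑ b, p s a * q s b * ∑ s', P s a b s' * W s' := by
  simp only [mulVec, dotProduct, transitionMatrix, of_apply, sum_mul, mul_sum, mul_assoc]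
  rw [sum_comm]
  exact sum_congr rfl fun a _ => sum_comm

lemma sum_bellman_eq (W : S → ℝ) (s : S) :
    ∑ a, ∑ b, p s a * q s b * (G s a b + γ * ∑ s', P s a b s' * W s') =
      ∑ a, ∑ b, p s a * q s b * G s a b + γ * (transitionMatrix P p q *ᵥ W) s := by
  simp only [transitionMatrix_mulVec_apply, mul_add, sum_add_distrib, mul_sum]
  simp only [mul_left_comm γ]

lemma payoff_eq (hQ : ∀ s a b, Q s a b = G s a b + γ * ∑ s', P s a b s' * W s') (s : S) :
    payoff Q p q s = ∑ a, ∑ b, p s a * q s b * G s a b + γ * (transitionMatrix P p q *ᵥ W) s := by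
  rw [← sum_bellman_eq]
  simp only [payoff, hQ, mul_right_comm (p s _)]

lemma sub_eq_payoff_sub_add_smul_mulVec (V : S → ℝ)
    (hQ : ∀ s a b, Q s a b = G s a b + γ * ∑ s', P s a b s' * W s')
    (hV : ∀ s, V s = ∑ a, ∑ b, p s a * q s b * (G s a b + γ * ∑ s', P s a b s' * V s')) :
    V - W = (payoff Q p q - W) + γ • transitionMatrix P p q *ᵥ (V - W) := by
  ext s
  simp only [Pi.sub_apply, Pi.add_apply, Pi.smul_apply, smul_eq_mul, mulVec_sub]
  rw [hV s, sum_bellman_eq, payoff_eq hQ]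
  ring

lemma payoff_eq_of_bellman (hQ : ∀ s a b, Q s a b = G s a b + γ * ∑ s', P s a b s' * W s')
    (hW : ∀ s, W s = ∑ a, ∑ b, p s a * q s b * (G s a b + γ * ∑ s', P s a b s' * W s')) :
    payoff Q p q = W := by
  ext s
  rw [payoff_eq hQ, hW s, sum_bellman_eq]

end MarkovGame

lemma IsPolicy.update {S A : Type*} [Fintype A] [DecidableEq S] {p q : S → A → ℝ}
    (hp : IsPolicy p) (hq : IsPolicy q) (s₀ : S) : IsPolicy (Function.update p s₀ (q s₀)) := by
  intro s
  rcases eq_or_ne s s₀ with rfl | hs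
  · simpa using hq s
  · simpa [hs] using hp s

section Equilibrium

variable {S A : Type*} [Fintype S] [Fintype A] {γ : ℝ} {G : S → A → A → ℝ}
  {P : S → A → A → S → ℝ} {V : (S → A → ℝ) → (S → A → ℝ) → S → ℝ} {xstar ystar : S → A → ℝ}
  {Q : S → A → A → ℝ}

lemma payoff_le_value_of_nash (hγ0 : 0 ≤ γ) (hγ1 : γ < 1)
    (hP : ∀ s a b, (∀ s', 0 ≤ P s a b s') ∧ ∑ s', P s a b s' = 1)
    (hBellman : ∀ x y, IsPolicy x → IsPolicy y → ∀ s,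
      V x y s = ∑ a, ∑ b, x s a * y s b * (G s a b + γ * ∑ s', P s a b s' * V x y s'))
    (hx : IsPolicy xstar) (hy : IsPolicy ystar)
    (hNE : ∀ x y, IsPolicy x → IsPolicy y → ∀ s,
      V xstar y s ≤ V xstar ystar s ∧ V xstar ystar s ≤ V x ystar s)
    (hQ : ∀ s a b, Q s a b = G s a b + γ * ∑ s', P s a b s' * V xstar ystar s')
    {y' : S → A → ℝ} (hy' : IsPolicy y') (s₀ : S) :
    payoff Q xstar y' s₀ ≤ V xstar ystar s₀ := by
  classical
  have hyt := hy.update hy' s₀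
  have hoff : ∀ s ≠ s₀,
      (payoff Q xstar (Function.update ystar s₀ (y' s₀)) - V xstar ystar) s = 0 := fun s hs => by
    rw [Pi.sub_apply, sub_eq_zero, ← payoff_eq_of_bellman hQ (hBellman _ _ hx hy)]
    simp [payoff, hs]
  have hgap := nonpos_of_eq_add_smul_mulVec_of_nonpos
    (transitionMatrix_mem_rowStochastic hP hx hyt) hγ0 hγ1
    (sub_eq_payoff_sub_add_smul_mulVec _ hQ (hBellman _ _ hx hyt))
    (fun s => sub_nonpos.2 (hNE _ _ hx hyt s).1) hoff
  simpa [payoff] using hgap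

lemma value_le_payoff_of_nash (hγ0 : 0 ≤ γ) (hγ1 : γ < 1)
    (hP : ∀ s a b, (∀ s', 0 ≤ P s a b s') ∧ ∑ s', P s a b s' = 1)
    (hBellman : ∀ x y, IsPolicy x → IsPolicy y → ∀ s,
      V x y s = ∑ a, ∑ b, x s a * y s b * (G s a b + γ * ∑ s', P s a b s' * V x y s'))
    (hx : IsPolicy xstar) (hy : IsPolicy ystar)
    (hNE : ∀ x y, IsPolicy x → IsPolicy y → ∀ s,
      V xstar y s ≤ V xstar ystar s ∧ V xstar ystar s ≤ V x ystar s)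
    (hQ : ∀ s a b, Q s a b = G s a b + γ * ∑ s', P s a b s' * V xstar ystar s')
    {x' : S → A → ℝ} (hx' : IsPolicy x') (s₀ : S) :
    V xstar ystar s₀ ≤ payoff Q x' ystar s₀ := by
  classical
  have hxt := hx.update hx' s₀
  have hoff : ∀ s ≠ s₀,
      (payoff Q (Function.update xstar s₀ (x' s₀)) ystar - V xstar ystar) s = 0 := fun s hs => by
    rw [Pi.sub_apply, sub_eq_zero, ← payoff_eq_of_bellman hQ (hBellman _ _ hx hy)]
    simp [payoff, hs]
  have hgap := nonneg_of_eq_add_smul_mulVec_of_nonneg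
    (transitionMatrix_mem_rowStochastic hP hxt hy) hγ0 hγ1
    (sub_eq_payoff_sub_add_smul_mulVec _ hQ (hBellman _ _ hxt hy))
    (fun s => sub_nonneg.2 (hNE _ _ hxt hy s).2) hoff
  simpa [payoff] using hgap

end Equilibrium

theorem stmt_13_general {S A : Type*} [Fintype S] [Fintype A]
    (γ : ℝ) (hγ0 : 0 ≤ γ) (hγ1 : γ < 1)
    (G : S → A → A → ℝ)
    (P : S → A → A → S → ℝ)
    (hP : ∀ s a b, (∀ s', 0 ≤ P s a b s') ∧ ∑ s', P s a b s' = 1)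
    -- value function of stationary policy pairs, characterized by the Bellman equation
    (V : (S → A → ℝ) → (S → A → ℝ) → S → ℝ)
    (hBellman : ∀ x y, IsPolicy x → IsPolicy y → ∀ s,
      V x y s = ∑ a, ∑ b, x s a * y s b * (G s a b + γ * ∑ s', P s a b s' * V x y s'))
    -- a Nash equilibrium policy pair and the corresponding minimax value and Q-function
    (xstar ystar : S → A → ℝ) (hx : IsPolicy xstar) (hy : IsPolicy ystar)
    (hNE : ∀ x y, IsPolicy x → IsPolicy y → ∀ s,
      V xstar y s ≤ V xstar ystar s ∧ V xstar ystar s ≤ V x ystar s)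
    (Vstar : S → ℝ) (hVstar : ∀ s, Vstar s = V xstar ystar s)
    (Qstar : S → A → A → ℝ)
    (hQstar : ∀ s a b, Qstar s a b = G s a b + γ * ∑ s', P s a b s' * Vstar s')
    -- the given policy pair and a bound on its per-state duality gap w.r.t. `Qstar`
    (x y : S → A → ℝ) (hxp : IsPolicy x) (hyp : IsPolicy y)
    (M : ℝ)
    (hM : ∀ s, ∀ x' y', IsPolicy x' → IsPolicy y' →
      (∑ a, ∑ b, x s a * Qstar s a b * y' s b) - (∑ a, ∑ b, x' s a * Qstar s a b * y s b) ≤ M) :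
    ∀ s, ∀ x' y', IsPolicy x' → IsPolicy y' →
      V x y' s - V x' y s ≤ (2 / (1 - γ)) * M := by
  classical
  intro s x' y' hx' hy'
  obtain rfl : Vstar = V xstar ystar := funext hVstar
  have hgap_left : ∀ s, (payoff Qstar x y' - V xstar ystar) s ≤ M := fun s => by
    rw [Pi.sub_apply]
    have h : payoff Qstar x y' s - payoff Qstar xstar y s ≤ M := hM s xstar y' hx hy'
    linarith [payoff_le_value_of_nash hγ0 hγ1 hP hBellman hx hy hNE hQstar hyp s]
  have hgap_right : ∀ s, (-(payoff Qstar x' y - V xstar ystar)) s ≤ M := fun s => by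
    rw [Pi.neg_apply, Pi.sub_apply, neg_sub]
    have h : payoff Qstar x ystar s - payoff Qstar x' y s ≤ M := hM s x' ystar hx' hy
    linarith [value_le_payoff_of_nash hγ0 hγ1 hP hBellman hx hy hNE hQstar hxp s]
  have h_left := le_div_one_sub_of_eq_add_smul_mulVec
    (transitionMatrix_mem_rowStochastic hP hxp hy') hγ0 hγ1
    (sub_eq_payoff_sub_add_smul_mulVec _ hQstar (hBellman _ _ hxp hy')) hgap_left s
  have h_right := le_div_one_sub_of_eq_add_smul_mulVec
    (transitionMatrix_mem_rowStochastic hP hx' hyp) hγ0 hγ1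
    (neg_eq_neg_add_smul_mulVec_neg
      (sub_eq_payoff_sub_add_smul_mulVec _ hQstar (hBellman _ _ hx' hyp))) hgap_right s
  calc V x y' s - V x' y s = (V x y' - V xstar ystar) s + (-(V x' y - V xstar ystar)) s := by
        simp only [Pi.sub_apply, Pi.neg_apply]; ring
    _ ≤ M / (1 - γ) + M / (1 - γ) := add_le_add h_left h_right
    _ = 2 / (1 - γ) * M := by ring

theorem stmt_13 {S A : Type*} [Fintype S] [Fintype A]
    (γ : ℝ) (hγ0 : 0 ≤ γ) (hγ1 : γ < 1)
    (G : S → A → A → ℝ) (hG : ∀ s a b, 0 ≤ G s a b ∧ G s a b ≤ 1)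
    (P : S → A → A → S → ℝ)
    (hP : ∀ s a b, (∀ s', 0 ≤ P s a b s') ∧ ∑ s', P s a b s' = 1)
    -- value function of stationary policy pairs, characterized by the Bellman equation
    (V : (S → A → ℝ) → (S → A → ℝ) → S → ℝ)
    (hBellman : ∀ x y, IsPolicy x → IsPolicy y → ∀ s,
      V x y s = ∑ a, ∑ b, x s a * y s b * (G s a b + γ * ∑ s', P s a b s' * V x y s'))
    -- a Nash equilibrium policy pair and the corresponding minimax value and Q-function
    (xstar ystar : S → A → ℝ) (hx : IsPolicy xstar) (hy : IsPolicy ystar)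
    (hNE : ∀ x y, IsPolicy x → IsPolicy y → ∀ s,
      V xstar y s ≤ V xstar ystar s ∧ V xstar ystar s ≤ V x ystar s)
    (Vstar : S → ℝ) (hVstar : ∀ s, Vstar s = V xstar ystar s)
    (Qstar : S → A → A → ℝ)
    (hQstar : ∀ s a b, Qstar s a b = G s a b + γ * ∑ s', P s a b s' * Vstar s')
    -- the given policy pair and a bound on its per-state duality gap w.r.t. `Qstar`
    (x y : S → A → ℝ) (hxp : IsPolicy x) (hyp : IsPolicy y)
    (M : ℝ)
    (hM : ∀ s, ∀ x' y', IsPolicy x' → IsPolicy y' →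
      (∑ a, ∑ b, x s a * Qstar s a b * y' s b) - (∑ a, ∑ b, x' s a * Qstar s a b * y s b) ≤ M) :
    ∀ s, ∀ x' y', IsPolicy x' → IsPolicy y' →
      V x y' s - V x' y s ≤ (2 / (1 - γ)) * M :=
  stmt_13_general γ hγ0 hγ1 G P hP V hBellman xstar ystar hx hy hNE Vstar hVstar Qstar hQstar x y
    hxp hyp M hM
end

section
/- Let $(w_t)_{t\ge 1}$ be a sequence in a finite-dimensional space with $\|w_{t+1} - w_t\|_1 \le c/t$ for all $t$ and some constant $c > 0$. If additionally each $w_t$ lies in a set on which a function $F$ is $M$-Lipschitz in $\ell_1$ norm, then $|F(w_{t+1}) - F(w_t)| \le Mc/t$ and $\sum_{i=1}^{t} w^i_t |F(w_{i+1}) - F(w_i)| \le 9 Mc\ln(t)\, t^{-1+h}$, where $w^i_t = \prod_{j=i+1}^t(1 - j^{-h})$ for some $0 < h < 1$ and $t \ge (\frac{24}{1-h}\ln\frac{12}{1-h})^{\frac{1}{1-h}}$. -/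
/-!
Lipschitz continuity turns the step bound into `|F (w (i+1)) - F (w i)| ≤ M c / i`, so
everything reduces to bounding `∑_{i ≤ t} Q_i / i` for the weights
`Q_i = decayWeight h t i = ∏_{j=i+1}^t (1 - j^{-h})`. For `2 i ≤ t` we have
`Q_i ≤ exp (-(t - i) t^{-h}) ≤ exp (-t^{1-h} / 2) ≤ t^{h-1}`, so these terms contribute at
most `t^{h-1} (1 + log t)`. For `2 i > t` we use `1 / i ≤ 2 / t` together with `∑ Q_i ≤ t^h`,
which comes from telescoping `Q_{i+1} - Q_i = (i+1)^{-h} Q_{i+1}`. The total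
`(3 + log t) t^{h-1}` is at most `9 log t · t^{h-1}` as soon as `log t ≥ 1`.
-/

open Finset Real

lemma Real.le_exp_half (y : ℝ) : y ≤ exp (y / 2) := by
  have hsq : exp (y / 2) = exp (y / 4) ^ 2 := by rw [sq, ← exp_add]; ring_nf
  rcases lt_or_ge y 0 with hy | hy
  · linarith [exp_pos (y / 2)]
  · nlinarith [add_one_le_exp (y / 4), sq_nonneg (y / 4 - 1)]

lemma sum_Icc_inv_le_one_add_log (n : ℕ) : ∑ i ∈ Icc 1 n, (i : ℝ)⁻¹ ≤ 1 + log n := by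
  simpa [harmonic_eq_sum_Icc] using harmonic_le_one_add_log n

noncomputable def decayWeight (h : ℝ) (t i : ℕ) : ℝ :=
  ∏ j ∈ Ioc i t, (1 - (j : ℝ) ^ (-h))

section decayWeight

variable {h : ℝ} {t i : ℕ}

lemma natCast_rpow_neg_le_one (hh : 0 ≤ h) {j : ℕ} (hj : 1 ≤ j) : (j : ℝ) ^ (-h) ≤ 1 :=
  rpow_le_one_of_one_le_of_nonpos (by exact_mod_cast hj) (by linarith)

lemma decayWeight_nonneg (hh : 0 ≤ h) : 0 ≤ decayWeight h t i :=
  prod_nonneg fun j hj =>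
    sub_nonneg.2 (natCast_rpow_neg_le_one hh (by have := (mem_Ioc.1 hj).1; omega))

@[simp]
lemma decayWeight_self : decayWeight h t t = 1 := by simp [decayWeight]

lemma decayWeight_eq_mul_succ (hi : i < t) :
    decayWeight h t i = (1 - ((i + 1 : ℕ) : ℝ) ^ (-h)) * decayWeight h t (i + 1) := by
  rw [decayWeight, decayWeight, ← Icc_add_one_left_eq_Ioc, ← Ioc_insert_left hi,
    prod_insert (by simp)]

lemma decayWeight_le_exp (hh : 0 ≤ h) (hit : i ≤ t) :
    decayWeight h t i ≤ exp (-(((t : ℝ) - i) * (t : ℝ) ^ (-h))) := by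
  calc decayWeight h t i ≤ ∏ j ∈ Ioc i t, exp (-(j : ℝ) ^ (-h)) :=
        prod_le_prod (fun j hj => sub_nonneg.2 (natCast_rpow_neg_le_one hh
          (by have := (mem_Ioc.1 hj).1; omega)))
          fun j _ => by linarith [add_one_le_exp (-(j : ℝ) ^ (-h))]
    _ = exp (-∑ j ∈ Ioc i t, (j : ℝ) ^ (-h)) := by rw [← exp_sum, sum_neg_distrib]
    _ ≤ exp (-(((t : ℝ) - i) * (t : ℝ) ^ (-h))) := by
        gcongr
        calc ((t : ℝ) - i) * (t : ℝ) ^ (-h) = ∑ j ∈ Ioc i t, (t : ℝ) ^ (-h) := by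
              simp [Nat.card_Ioc, Nat.cast_sub hit]
          _ ≤ ∑ j ∈ Ioc i t, (j : ℝ) ^ (-h) := sum_le_sum fun j hj => by
              obtain ⟨hij, hjt⟩ := mem_Ioc.1 hj
              exact rpow_le_rpow_of_nonpos (by exact_mod_cast (by omega : 0 < j))
                (by exact_mod_cast hjt) (by linarith)

lemma decayWeight_le_rpow (hh : 0 ≤ h) (hi : 1 ≤ i) (hit : 2 * i ≤ t) :
    decayWeight h t i ≤ (t : ℝ) ^ (h - 1) := by
  have ht : (0 : ℝ) < t := by exact_mod_cast (by omega : 0 < t)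
  have hhalf : (t : ℝ) / 2 ≤ t - i := by
    have : (2 * i : ℝ) ≤ t := by exact_mod_cast hit
    linarith
  calc decayWeight h t i ≤ exp (-(((t : ℝ) - i) * (t : ℝ) ^ (-h))) :=
        decayWeight_le_exp hh (by omega)
    _ ≤ exp (-((t : ℝ) ^ (1 - h) / 2)) := by
        gcongr
        rw [sub_eq_add_neg, rpow_add ht, rpow_one]
        nlinarith [rpow_pos_of_pos ht (-h)]
    _ ≤ ((t : ℝ) ^ (1 - h))⁻¹ := by
        rw [exp_neg]
        exact inv_anti₀ (by positivity) (le_exp_half _)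
    _ = (t : ℝ) ^ (h - 1) := by rw [← rpow_neg ht.le, neg_sub]

lemma sum_decayWeight_le_rpow (hh : 0 ≤ h) (ht : 0 < t) :
    ∑ i ∈ Icc 1 t, decayWeight h t i ≤ (t : ℝ) ^ h := by
  have ht' : (0 : ℝ) < t := by exact_mod_cast ht
  have htel : (t : ℝ) ^ (-h) * ∑ i ∈ Icc 1 t, decayWeight h t i ≤ 1 := by
    calc (t : ℝ) ^ (-h) * ∑ i ∈ Icc 1 t, decayWeight h t i
        = ∑ i ∈ range t, (t : ℝ) ^ (-h) * decayWeight h t (i + 1) := by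
          rw [mul_sum, range_eq_Ico, sum_Ico_add' (fun i => (t : ℝ) ^ (-h) * decayWeight h t i)]
          rfl
      _ ≤ ∑ i ∈ range t, (decayWeight h t (i + 1) - decayWeight h t i) :=
          sum_le_sum fun i hi => by
            have hit := mem_range.1 hi
            have hpow : (t : ℝ) ^ (-h) ≤ ((i + 1 : ℕ) : ℝ) ^ (-h) :=
              rpow_le_rpow_of_nonpos (by positivity) (by exact_mod_cast hit) (by linarith)
            rw [decayWeight_eq_mul_succ hit]
            nlinarith [decayWeight_nonneg hh (h := h) (t := t) (i := i + 1)]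
      _ = decayWeight h t t - decayWeight h t 0 := sum_range_sub _ _
      _ ≤ 1 := by
          rw [decayWeight_self]
          linarith [decayWeight_nonneg hh (h := h) (t := t) (i := 0)]
  rwa [rpow_neg ht'.le, inv_mul_le_iff₀ (by positivity), mul_one] at htel

lemma sum_decayWeight_div_le (hh : 0 ≤ h) (ht : 0 < t) :
    ∑ i ∈ Icc 1 t, decayWeight h t i / i ≤ (3 + log t) * (t : ℝ) ^ (h - 1) := by
  have ht' : (0 : ℝ) < t := by exact_mod_cast ht
  have hterm : ∀ i ∈ Icc 1 t,
      decayWeight h t i / i ≤ (t : ℝ) ^ (h - 1) / i + 2 / t * decayWeight h t i := by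
    intro i hi
    obtain ⟨h1i, hit⟩ := mem_Icc.1 hi
    have hQ := decayWeight_nonneg hh (h := h) (t := t) (i := i)
    have hi' : (0 : ℝ) < i := by exact_mod_cast h1i
    rcases le_or_gt (2 * i) t with hle | hgt
    · have := div_le_div_of_nonneg_right (decayWeight_le_rpow hh h1i hle) hi'.le
      linarith [mul_nonneg (by positivity : (0 : ℝ) ≤ 2 / t) hQ]
    · have hhalf : (t : ℝ) / 2 ≤ i := by
        have : (t : ℝ) < 2 * i := by exact_mod_cast hgt
        linarith
      calc decayWeight h t i / i ≤ decayWeight h t i / (t / 2) :=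
            div_le_div_of_nonneg_left hQ (by positivity) hhalf
        _ = 2 / t * decayWeight h t i := by ring
        _ ≤ (t : ℝ) ^ (h - 1) / i + 2 / t * decayWeight h t i := by
            have : 0 ≤ (t : ℝ) ^ (h - 1) / i := by positivity
            linarith
  calc ∑ i ∈ Icc 1 t, decayWeight h t i / i
      ≤ ∑ i ∈ Icc 1 t, ((t : ℝ) ^ (h - 1) / i + 2 / t * decayWeight h t i) :=
        sum_le_sum hterm
    _ = (t : ℝ) ^ (h - 1) * ∑ i ∈ Icc 1 t, (i : ℝ)⁻¹
          + 2 / t * ∑ i ∈ Icc 1 t, decayWeight h t i := by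
        simp only [sum_add_distrib, mul_sum, div_eq_mul_inv]
    _ ≤ (t : ℝ) ^ (h - 1) * (1 + log t) + 2 / t * (t : ℝ) ^ h := by
        gcongr
        · exact sum_Icc_inv_le_one_add_log t
        · exact sum_decayWeight_le_rpow hh ht
    _ = (3 + log t) * (t : ℝ) ^ (h - 1) := by
        rw [rpow_sub_one ht'.ne']
        ring

end decayWeight

lemma one_le_log_of_rpow_le {h : ℝ} (hh0 : 0 ≤ h) (hh1 : h < 1) {t : ℝ}
    (ht : ((24 / (1 - h)) * log (12 / (1 - h))) ^ ((1 : ℝ) / (1 - h)) ≤ t) : 1 ≤ log t := by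
  have h1h : 0 < 1 - h := by linarith
  have he := exp_one_lt_d9
  have hlog : 1 ≤ log (12 / (1 - h)) := by
    rw [le_log_iff_exp_le (by positivity), le_div_iff₀ h1h]
    nlinarith
  have hA : 24 ≤ (24 / (1 - h)) * log (12 / (1 - h)) := by
    have : 24 ≤ 24 / (1 - h) := by rw [le_div_iff₀ h1h]; nlinarith
    nlinarith
  have hexp : 1 ≤ (1 : ℝ) / (1 - h) := by rw [le_div_iff₀ h1h]; linarith
  have := rpow_le_rpow_of_exponent_le (by linarith) hexp (x := (24 / (1 - h)) * log (12 / (1 - h)))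
  rw [rpow_one] at this
  rw [le_log_iff_exp_le (by linarith)]
  norm_num at he
  linarith

theorem stmt_16 {n : ℕ} (w : ℕ → (Fin n → ℝ)) (c : ℝ) (hc : 0 < c)
    (hstep : ∀ t : ℕ, 1 ≤ t → ∑ a, |w (t + 1) a - w t a| ≤ c / t)
    (K : Set (Fin n → ℝ)) (hK : ∀ t, w t ∈ K)
    (F : (Fin n → ℝ) → ℝ) (M : ℝ) (hM : 0 ≤ M)
    (hLip : ∀ u ∈ K, ∀ v ∈ K, |F u - F v| ≤ M * ∑ a, |u a - v a|)
    (h : ℝ) (hh0 : 0 < h) (hh1 : h < 1) (t : ℕ)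
    (ht : ((24 / (1 - h)) * Real.log (12 / (1 - h))) ^ ((1:ℝ) / (1 - h)) ≤ (t : ℝ)) :
    (∀ i : ℕ, 1 ≤ i → |F (w (i + 1)) - F (w i)| ≤ M * c / i) ∧
    ∑ i ∈ Finset.Icc 1 t,
        (∏ j ∈ Finset.Icc (i + 1) t, (1 - (j : ℝ) ^ (-h))) * |F (w (i + 1)) - F (w i)|
      ≤ 9 * M * c * Real.log t * (t : ℝ) ^ (-1 + h) := by
  have hF : ∀ i : ℕ, 1 ≤ i → |F (w (i + 1)) - F (w i)| ≤ M * c / i := fun i hi =>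
    calc |F (w (i + 1)) - F (w i)| ≤ M * ∑ a, |w (i + 1) a - w i a| := hLip _ (hK _) _ (hK _)
      _ ≤ M * (c / i) := mul_le_mul_of_nonneg_left (hstep i hi) hM
      _ = M * c / i := by ring
  refine ⟨hF, ?_⟩
  have hlog : 1 ≤ log t := one_le_log_of_rpow_le hh0.le hh1 ht
  have ht0 : 0 < t := Nat.pos_of_ne_zero fun ht0 => by norm_num [ht0] at hlog
  have hMc : 0 ≤ M * c := mul_nonneg hM hc.le
  calc ∑ i ∈ Icc 1 t,
        (∏ j ∈ Icc (i + 1) t, (1 - (j : ℝ) ^ (-h))) * |F (w (i + 1)) - F (w i)|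
      = ∑ i ∈ Icc 1 t, decayWeight h t i * |F (w (i + 1)) - F (w i)| := by
        simp only [decayWeight, Icc_add_one_left_eq_Ioc]
    _ ≤ ∑ i ∈ Icc 1 t, M * c * (decayWeight h t i / i) := sum_le_sum fun i hi => by
        rw [mul_div_left_comm]
        exact mul_le_mul_of_nonneg_left (hF i (mem_Icc.1 hi).1) (decayWeight_nonneg hh0.le)
    _ ≤ M * c * ((3 + log t) * (t : ℝ) ^ (h - 1)) := by
        rw [← mul_sum]
        exact mul_le_mul_of_nonneg_left (sum_decayWeight_div_le hh0.le ht0) hMc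
    _ ≤ 9 * M * c * log t * (t : ℝ) ^ (-1 + h) := by
        rw [neg_add_eq_sub]
        nlinarith [mul_nonneg hMc (rpow_nonneg (Nat.cast_nonneg t) (h - 1))]
end
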